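/- arXiv:2510.04807 — 2 statements merged into one kernel-verified Lean document; each statement's English description precedes it below -/
import Mathlib

section
/- (Ball invariance, Lemma 1.) Let C be an affine feedback policy with x̄₀ = μ_I, let r_I, r_N ≥ 0, and let λ ≥ 0. Then the following are equivalent: (i) every moment pair of the form (μ₀, λI) belonging to P^BALL(μ_I, r_I), when propagated by C, satisfies the moment-form state and control constraints at every timestep and has terminal pair (μ_T, Σ_T) ∈ P^BALL(x̄_T, r_N); (ii) every moment pair (μ₀, Σ₀) ∈ P^BALL(μ_I, r_I) with Σ₀ ⪰ λI, when propagated by C, satisfies the moment-form state and control constraints at every timestep and has terminal pair (μ_T, Σ_T) ∈ P^BALL(x̄_T, r_N). -/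
open Matrix

noncomputable def euclNorm {n : ℕ} (v : Fin n → ℝ) : ℝ := Real.sqrt (∑ i, v i ^ 2)

noncomputable def lamMax {n : ℕ} (M : Matrix (Fin n) (Fin n) ℝ) : ℝ :=
  sSup {r : ℝ | ∃ v : Fin n → ℝ, euclNorm v = 1 ∧ r = v ⬝ᵥ M.mulVec v}

noncomputable def lamMin {n : ℕ} (M : Matrix (Fin n) (Fin n) ℝ) : ℝ :=
  sInf {r : ℝ | ∃ v : Fin n → ℝ, euclNorm v = 1 ∧ r = v ⬝ᵥ M.mulVec v}

noncomputable def specNorm {n p : ℕ} (M : Matrix (Fin n) (Fin p) ℝ) : ℝ :=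
  Real.sqrt (lamMax (Mᵀ * M))

structure Policy (n m T : ℕ) (A : Matrix (Fin n) (Fin n) ℝ) (B : Matrix (Fin n) (Fin m) ℝ) where
  xbar : ℕ → Fin n → ℝ
  ubar : ℕ → Fin m → ℝ
  K : ℕ → Matrix (Fin m) (Fin n) ℝ
  xbar_dyn : ∀ k, k < T → xbar (k + 1) = A.mulVec (xbar k) + B.mulVec (ubar k)

namespace Policy

variable {n m T : ℕ} {A : Matrix (Fin n) (Fin n) ℝ} {B : Matrix (Fin n) (Fin m) ℝ}

noncomputable def mean (C : Policy n m T A B) (mu0 : Fin n → ℝ) : ℕ → Fin n → ℝ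
  | 0 => mu0
  | k + 1 => A.mulVec (C.mean mu0 k) + B.mulVec (C.ubar k)
      + B.mulVec ((C.K k).mulVec (C.mean mu0 k - C.xbar k))

noncomputable def cov (C : Policy n m T A B) (D : Matrix (Fin n) (Fin n) ℝ)
    (Sig0 : Matrix (Fin n) (Fin n) ℝ) : ℕ → Matrix (Fin n) (Fin n) ℝ
  | 0 => Sig0
  | k + 1 => (A + B * C.K k) * C.cov D Sig0 k * (A + B * C.K k)ᵀ + D * Dᵀ

noncomputable def clProd (C : Policy n m T A B) : ℕ → Matrix (Fin n) (Fin n) ℝ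
  | 0 => 1
  | k + 1 => (A + B * C.K k) * C.clProd k

end Policy

def stateOK {n m T : ℕ} {A : Matrix (Fin n) (Fin n) ℝ} {B : Matrix (Fin n) (Fin m) ℝ}
    (c : ℝ) {I : ℕ} (ax : Fin I → Fin n → ℝ) (bx : Fin I → ℝ)
    (D : Matrix (Fin n) (Fin n) ℝ) (C : Policy n m T A B)
    (mu0 : Fin n → ℝ) (Sig0 : Matrix (Fin n) (Fin n) ℝ) : Prop :=
  ∀ i : Fin I, ∀ k ≤ T,
    ax i ⬝ᵥ C.mean mu0 k + c * Real.sqrt (ax i ⬝ᵥ (C.cov D Sig0 k).mulVec (ax i)) ≤ bx i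

def ctrlOK {n m T : ℕ} {A : Matrix (Fin n) (Fin n) ℝ} {B : Matrix (Fin n) (Fin m) ℝ}
    (c : ℝ) {J : ℕ} (au : Fin J → Fin m → ℝ) (bu : Fin J → ℝ)
    (D : Matrix (Fin n) (Fin n) ℝ) (C : Policy n m T A B)
    (mu0 : Fin n → ℝ) (Sig0 : Matrix (Fin n) (Fin n) ℝ) : Prop :=
  ∀ j : Fin J, ∀ k < T,
    au j ⬝ᵥ (C.ubar k + (C.K k).mulVec (C.mean mu0 k - C.xbar k))
      + c * Real.sqrt (au j ⬝ᵥ (C.K k * C.cov D Sig0 k * (C.K k)ᵀ).mulVec (au j)) ≤ bu j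

def inBall {n : ℕ} (c : ℝ) (muHat : Fin n → ℝ) (rHat : ℝ)
    (mu : Fin n → ℝ) (Sig : Matrix (Fin n) (Fin n) ℝ) : Prop :=
  euclNorm (mu - muHat) + c * Real.sqrt (lamMax Sig) ≤ rHat

def BRS {n m : ℕ} (T : ℕ) (A : Matrix (Fin n) (Fin n) ℝ) (B : Matrix (Fin n) (Fin m) ℝ)
    (D : Matrix (Fin n) (Fin n) ℝ) (c : ℝ) {I J : ℕ}
    (ax : Fin I → Fin n → ℝ) (bx : Fin I → ℝ) (au : Fin J → Fin m → ℝ) (bu : Fin J → ℝ)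
    (S : Set ((Fin n → ℝ) × Matrix (Fin n) (Fin n) ℝ)) :
    Set ((Fin n → ℝ) × Matrix (Fin n) (Fin n) ℝ) :=
  {p | p.2.PosSemidef ∧ ∃ C : Policy n m T A B, C.xbar 0 = p.1 ∧
    stateOK c ax bx D C p.1 p.2 ∧ ctrlOK c au bu D C p.1 p.2 ∧
    (C.mean p.1 T, C.cov D p.2 T) ∈ S}

def Proj {n : ℕ} (S : Set ((Fin n → ℝ) × Matrix (Fin n) (Fin n) ℝ)) : Set (Fin n → ℝ) :=
  {mu | ∃ Sig, (mu, Sig) ∈ S}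

/-!
Write `Φ_k` for the closed-loop transition matrix `clProd k`. Then `μ_k - x̄_k = Φ_k (μ₀ - x̄₀)` and
`Σ_k(Σ₀) - Σ_k(λ I) = Φ_k (Σ₀ - λ I) Φ_kᵀ`, so in every direction `a` the standard deviation
`√(aᵀ Σ_k a)` grows by at most `(√σ - √λ) ‖Φ_kᵀ a‖` when `λ I` is replaced by `Σ₀ ⪰ λ I` with
`σ = λ_max Σ₀`. Each constraint is a linear functional of the mean plus `c` times such a standard
deviation, and `sup_{‖w‖ ≤ ρ} aᵀ Φ_k w = ρ ‖Φ_kᵀ a‖`. Hence `(μ₀, Σ₀)` is dominated by the pairs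
`(μ_I + w, λ I)` with `‖w‖ ≤ ‖μ₀ - μ_I‖ + c (√σ - √λ)`, and these all lie in the ball
`P^BALL(μ_I, r_I)` whenever `(μ₀, Σ₀)` does. The terminal ball condition is handled the same way,
through `‖Φ_T x‖ = sup_{‖u‖ ≤ 1} (Φ_Tᵀ u)ᵀ x` and the eigenvector of `λ_max Σ_T`.
-/

section

variable {n : ℕ}

theorem euclNorm_eq_norm_toLp (v : Fin n → ℝ) : euclNorm v = ‖WithLp.toLp 2 v‖ := by
  simp [euclNorm, EuclideanSpace.norm_eq]

theorem euclNorm_nonneg (v : Fin n → ℝ) : 0 ≤ euclNorm v := Real.sqrt_nonneg _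

theorem euclNorm_smul (t : ℝ) (v : Fin n → ℝ) : euclNorm (t • v) = |t| * euclNorm v := by
  simp [euclNorm_eq_norm_toLp, norm_smul]

theorem sq_euclNorm (v : Fin n → ℝ) : euclNorm v ^ 2 = v ⬝ᵥ v := by
  rw [euclNorm, Real.sq_sqrt (by positivity)]
  simp [dotProduct, sq]

theorem dotProduct_le_euclNorm_mul (v w : Fin n → ℝ) : v ⬝ᵥ w ≤ euclNorm v * euclNorm w := by
  simpa [euclNorm_eq_norm_toLp, EuclideanSpace.inner_toLp_toLp, dotProduct_comm]
    using real_inner_le_norm (WithLp.toLp 2 v) (WithLp.toLp 2 w)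

theorem exists_euclNorm_le_and_mul_le_dotProduct {r : ℝ} (hr : 0 ≤ r) (z : Fin n → ℝ) :
    ∃ w, euclNorm w ≤ r ∧ r * euclNorm z ≤ z ⬝ᵥ w := by
  rcases (euclNorm_nonneg z).eq_or_lt with hz | hz
  · exact ⟨0, by simpa [euclNorm] using hr, by simp [← hz]⟩
  · refine ⟨(r / euclNorm z) • z, ?_, ?_⟩
    · rw [euclNorm_smul, abs_of_nonneg (by positivity), div_mul_cancel₀ _ hz.ne']
    · rw [dotProduct_smul, smul_eq_mul, ← sq_euclNorm]
      exact le_of_eq (by field_simp)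

theorem exists_euclNorm_eq_one (hn : 1 ≤ n) : ∃ v : Fin n → ℝ, euclNorm v = 1 :=
  ⟨Pi.single ⟨0, hn⟩ 1, by simp [euclNorm_eq_norm_toLp]⟩

theorem transpose_mulVec_dotProduct {p : ℕ} (P : Matrix (Fin p) (Fin n) ℝ) (a : Fin p → ℝ)
    (w : Fin n → ℝ) : Pᵀ *ᵥ a ⬝ᵥ w = a ⬝ᵥ P *ᵥ w := by
  rw [dotProduct_mulVec, mulVec_transpose]

theorem dotProduct_mul_mul_transpose_mulVec {p : ℕ} (P : Matrix (Fin p) (Fin n) ℝ)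
    (M : Matrix (Fin n) (Fin n) ℝ) (a : Fin p → ℝ) :
    a ⬝ᵥ (P * M * Pᵀ) *ᵥ a = Pᵀ *ᵥ a ⬝ᵥ M *ᵥ (Pᵀ *ᵥ a) := by
  rw [← mulVec_mulVec, ← mulVec_mulVec, ← transpose_mulVec_dotProduct]

theorem dotProduct_smul_one_mulVec (lam : ℝ) (v : Fin n → ℝ) :
    v ⬝ᵥ (lam • (1 : Matrix (Fin n) (Fin n) ℝ)) *ᵥ v = lam * euclNorm v ^ 2 := by
  rw [smul_mulVec, one_mulVec, dotProduct_smul, smul_eq_mul, sq_euclNorm]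

theorem isCompact_rayleighQuotients (M : Matrix (Fin n) (Fin n) ℝ) :
    IsCompact {r : ℝ | ∃ v : Fin n → ℝ, euclNorm v = 1 ∧ r = v ⬝ᵥ M *ᵥ v} := by
  convert (isCompact_sphere (0 : EuclideanSpace ℝ (Fin n)) 1).image
    (f := fun x => x.ofLp ⬝ᵥ M *ᵥ x.ofLp) (by fun_prop) using 1
  ext r
  constructor
  · rintro ⟨v, hv, rfl⟩
    exact ⟨WithLp.toLp 2 v, by simpa [euclNorm_eq_norm_toLp] using hv, rfl⟩
  · rintro ⟨x, hx, rfl⟩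
    exact ⟨x.ofLp, by simpa [euclNorm_eq_norm_toLp] using hx, rfl⟩

theorem le_lamMax (M : Matrix (Fin n) (Fin n) ℝ) {v : Fin n → ℝ} (hv : euclNorm v = 1) :
    v ⬝ᵥ M *ᵥ v ≤ lamMax M :=
  le_csSup (isCompact_rayleighQuotients M).bddAbove ⟨v, hv, rfl⟩

theorem exists_dotProduct_mulVec_eq_lamMax (hn : 1 ≤ n) (M : Matrix (Fin n) (Fin n) ℝ) :
    ∃ v, euclNorm v = 1 ∧ v ⬝ᵥ M *ᵥ v = lamMax M := by
  obtain ⟨v, hv⟩ := exists_euclNorm_eq_one hn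
  obtain ⟨w, hw, hmax⟩ := (isCompact_rayleighQuotients M).sSup_mem ⟨_, v, hv, rfl⟩
  exact ⟨w, hw, hmax.symm⟩

theorem lamMax_smul_one (hn : 1 ≤ n) (lam : ℝ) :
    lamMax (lam • (1 : Matrix (Fin n) (Fin n) ℝ)) = lam := by
  have hunit (v : Fin n → ℝ) (hv : euclNorm v = 1) :
      v ⬝ᵥ (lam • (1 : Matrix (Fin n) (Fin n) ℝ)) *ᵥ v = lam := by
    rw [dotProduct_smul_one_mulVec, hv, one_pow, mul_one]
  obtain ⟨v, hv⟩ := exists_euclNorm_eq_one hn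
  refine le_antisymm (csSup_le ⟨_, v, hv, rfl⟩ ?_) ((hunit v hv).symm.le.trans (le_lamMax _ hv))
  rintro _ ⟨w, hw, rfl⟩
  exact (hunit w hw).le

theorem le_lamMax_of_posSemidef_sub (hn : 1 ≤ n) {S : Matrix (Fin n) (Fin n) ℝ} {lam : ℝ}
    (h : (S - lam • (1 : Matrix (Fin n) (Fin n) ℝ)).PosSemidef) : lam ≤ lamMax S := by
  obtain ⟨v, hv⟩ := exists_euclNorm_eq_one hn
  have := h.dotProduct_mulVec_nonneg v
  rw [star_trivial, sub_mulVec, dotProduct_sub, dotProduct_smul_one_mulVec, hv] at this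
  linarith [le_lamMax S hv]

theorem dotProduct_mulVec_le_lamMax_mul (M : Matrix (Fin n) (Fin n) ℝ) (v : Fin n → ℝ) :
    v ⬝ᵥ M *ᵥ v ≤ lamMax M * euclNorm v ^ 2 := by
  rcases (euclNorm_nonneg v).eq_or_lt with hv | hv
  · obtain rfl : v = 0 := by simpa [euclNorm_eq_norm_toLp] using hv.symm
    simp [← hv]
  · have hunit : euclNorm ((euclNorm v)⁻¹ • v) = 1 := by
      rw [euclNorm_smul, abs_inv, abs_of_pos hv, inv_mul_cancel₀ hv.ne']
    have := le_lamMax M hunit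
    rwa [mulVec_smul, dotProduct_smul, smul_dotProduct, smul_eq_mul, smul_eq_mul, ← mul_assoc,
      ← sq, inv_pow, inv_mul_le_iff₀ (by positivity), mul_comm] at this

theorem sqrt_le_sqrt_add_sqrt_sub_sqrt_mul {lam sig u t w : ℝ} (hlam : 0 ≤ lam) (hsig : lam ≤ sig)
    (hw : 0 ≤ w) (hu : lam * w ^ 2 ≤ u) (ht : t ≤ u + (sig - lam) * w ^ 2) :
    √t ≤ √u + (√sig - √lam) * w := by
  have hlu : √lam * w ≤ √u := by
    simpa [Real.sqrt_mul hlam, Real.sqrt_sq hw] using Real.sqrt_le_sqrt hu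
  have hls : 0 ≤ √sig - √lam := sub_nonneg.mpr (Real.sqrt_le_sqrt hsig)
  rw [Real.sqrt_le_left (by positivity)]
  -- expanding the square, the cross term `2 √u (√sig - √lam) w` dominates `2 √lam (√sig - √lam) w²`
  nlinarith [Real.sq_sqrt hlam, Real.sq_sqrt (hlam.trans hsig),
    Real.sq_sqrt ((mul_nonneg hlam (sq_nonneg w)).trans hu),
    mul_le_mul_of_nonneg_right hlu (mul_nonneg hls hw)]

theorem add_dotProduct_add_mul_le_of_forall {z x : Fin n → ℝ} {R κ c β q q' b : ℝ}
    (hx : euclNorm x ≤ R) (hκ : 0 ≤ κ) (hc : 0 ≤ c) (hq : q ≤ q' + κ * euclNorm z)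
    (H : ∀ w, euclNorm w ≤ R + c * κ → β + z ⬝ᵥ w + c * q' ≤ b) :
    β + z ⬝ᵥ x + c * q ≤ b := by
  have hR : 0 ≤ R := (euclNorm_nonneg x).trans hx
  obtain ⟨w, hw, hzw⟩ := exists_euclNorm_le_and_mul_le_dotProduct (r := R + c * κ) (by positivity) z
  have hzx : z ⬝ᵥ x ≤ euclNorm z * R :=
    (dotProduct_le_euclNorm_mul z x).trans (mul_le_mul_of_nonneg_left hx (euclNorm_nonneg z))
  nlinarith [H w hw, mul_le_mul_of_nonneg_left hq hc]

theorem mul_euclNorm_transpose_mulVec_le {p : ℕ} (Φ : Matrix (Fin p) (Fin n) ℝ) {r M : ℝ}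
    (hr : 0 ≤ r) (H : ∀ w, euclNorm w ≤ r → euclNorm (Φ *ᵥ w) ≤ M) (y : Fin p → ℝ) :
    r * euclNorm (Φᵀ *ᵥ y) ≤ M * euclNorm y := by
  obtain ⟨w, hw, hyw⟩ := exists_euclNorm_le_and_mul_le_dotProduct hr (Φᵀ *ᵥ y)
  calc r * euclNorm (Φᵀ *ᵥ y) ≤ y ⬝ᵥ Φ *ᵥ w := by rwa [← transpose_mulVec_dotProduct]
    _ ≤ euclNorm y * euclNorm (Φ *ᵥ w) := dotProduct_le_euclNorm_mul _ _
    _ ≤ M * euclNorm y := by nlinarith [H w hw, euclNorm_nonneg y]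

theorem euclNorm_mulVec_add_mul_le_of_forall {p : ℕ} (Φ : Matrix (Fin p) (Fin n) ℝ)
    {x : Fin n → ℝ} {v : Fin p → ℝ} {R κ c q q' b : ℝ} (hx : euclNorm x ≤ R) (hv : euclNorm v = 1)
    (hκ : 0 ≤ κ) (hc : 0 ≤ c) (hq : q ≤ q' + κ * euclNorm (Φᵀ *ᵥ v))
    (H : ∀ w, euclNorm w ≤ R + c * κ → euclNorm (Φ *ᵥ w) + c * q' ≤ b) :
    euclNorm (Φ *ᵥ x) + c * q ≤ b := by
  have hR : 0 ≤ R := (euclNorm_nonneg x).trans hx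
  have hr : 0 ≤ R + c * κ := by positivity
  have hM : 0 ≤ b - c * q' := by simpa [euclNorm] using H 0 (by simpa [euclNorm] using hr)
  have hΦ := mul_euclNorm_transpose_mulVec_le Φ hr (M := b - c * q')
    fun w hw => by linarith [H w hw]
  obtain ⟨u, hu, hxu⟩ := exists_euclNorm_le_and_mul_le_dotProduct zero_le_one (Φ *ᵥ x)
  have hux : euclNorm (Φ *ᵥ x) ≤ R * euclNorm (Φᵀ *ᵥ u) := calc
    euclNorm (Φ *ᵥ x) ≤ Φᵀ *ᵥ u ⬝ᵥ x := by
      rw [transpose_mulVec_dotProduct, dotProduct_comm u]; linarith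
    _ ≤ euclNorm (Φᵀ *ᵥ u) * euclNorm x := dotProduct_le_euclNorm_mul _ _
    _ ≤ R * euclNorm (Φᵀ *ᵥ u) := by nlinarith [euclNorm_nonneg (Φᵀ *ᵥ u)]
  -- the worse of the two directions `u`, `v` controls both terms
  have hmax : R * euclNorm (Φᵀ *ᵥ u) + c * κ * euclNorm (Φᵀ *ᵥ v)
      ≤ (R + c * κ) * max (euclNorm (Φᵀ *ᵥ u)) (euclNorm (Φᵀ *ᵥ v)) := by
    rw [add_mul]
    gcongr
    exacts [le_max_left _ _, le_max_right _ _]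
  rw [mul_max_of_nonneg _ _ hr] at hmax
  have hu' : (R + c * κ) * euclNorm (Φᵀ *ᵥ u) ≤ b - c * q' :=
    (hΦ u).trans (mul_le_of_le_one_right hM hu)
  have hv' : (R + c * κ) * euclNorm (Φᵀ *ᵥ v) ≤ b - c * q' := by simpa [hv] using hΦ v
  nlinarith [max_le hu' hv', mul_le_mul_of_nonneg_left hq hc]

namespace Policy

variable {m T I J : ℕ} {A : Matrix (Fin n) (Fin n) ℝ} {B : Matrix (Fin n) (Fin m) ℝ}
  (C : Policy n m T A B)

theorem mean_sub_xbar (mu0 : Fin n → ℝ) {k : ℕ} (hk : k ≤ T) :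
    C.mean mu0 k - C.xbar k = C.clProd k *ᵥ (mu0 - C.xbar 0) := by
  induction k with
  | zero => simp [mean, clProd]
  | succ k ih =>
    have hkT : k < T := hk
    rw [mean, clProd, C.xbar_dyn k hkT, ← mulVec_mulVec, ← ih hkT.le]
    simp only [add_mulVec, mulVec_sub, ← mulVec_mulVec]
    abel

theorem cov_sub_cov (D S S' : Matrix (Fin n) (Fin n) ℝ) (k : ℕ) :
    C.cov D S k - C.cov D S' k = C.clProd k * (S - S') * (C.clProd k)ᵀ := by
  induction k with
  | zero => simp [cov, clProd]
  | succ k ih =>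
    have hstep : C.cov D S (k + 1) - C.cov D S' (k + 1)
        = (A + B * C.K k) * (C.cov D S k - C.cov D S' k) * (A + B * C.K k)ᵀ := by
      rw [cov, cov]; noncomm_ring
    rw [hstep, ih, clProd, transpose_mul]
    noncomm_ring

theorem posSemidef_cov_smul_one_sub (D : Matrix (Fin n) (Fin n) ℝ) (lam : ℝ) (k : ℕ) :
    (C.cov D (lam • 1) k - lam • (C.clProd k * (C.clProd k)ᵀ)).PosSemidef := by
  induction k with
  | zero => simp [cov, clProd, PosSemidef.zero]
  | succ k ih =>
    have hstep : C.cov D (lam • 1) (k + 1) - lam • (C.clProd (k + 1) * (C.clProd (k + 1))ᵀ)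
        = (A + B * C.K k) * (C.cov D (lam • 1) k - lam • (C.clProd k * (C.clProd k)ᵀ))
            * (A + B * C.K k)ᵀ + D * Dᵀ := by
      simp only [cov, clProd, transpose_mul, Matrix.mul_sub, Matrix.sub_mul, mul_smul_comm,
        smul_mul_assoc, Matrix.mul_assoc]
      abel
    rw [hstep]
    have := (ih.mul_mul_conjTranspose_same (A + B * C.K k)).add
      (posSemidef_self_mul_conjTranspose D)
    rwa [conjTranspose_eq_transpose_of_trivial, conjTranspose_eq_transpose_of_trivial] at this

theorem sqrt_dotProduct_cov_mulVec_le (D : Matrix (Fin n) (Fin n) ℝ)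
    {Sig0 : Matrix (Fin n) (Fin n) ℝ} {lam : ℝ} (hlam : 0 ≤ lam) (hsig : lam ≤ lamMax Sig0)
    (k : ℕ) (a : Fin n → ℝ) :
    √(a ⬝ᵥ C.cov D Sig0 k *ᵥ a)
      ≤ √(a ⬝ᵥ C.cov D (lam • 1) k *ᵥ a)
        + (√(lamMax Sig0) - √lam) * euclNorm ((C.clProd k)ᵀ *ᵥ a) := by
  set z := (C.clProd k)ᵀ *ᵥ a
  have hquad (S : Matrix (Fin n) (Fin n) ℝ) :
      a ⬝ᵥ C.cov D S k *ᵥ a = a ⬝ᵥ C.cov D (lam • 1) k *ᵥ a + z ⬝ᵥ (S - lam • 1) *ᵥ z := by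
    rw [← dotProduct_mul_mul_transpose_mulVec, ← C.cov_sub_cov, sub_mulVec, dotProduct_sub]
    ring
  refine sqrt_le_sqrt_add_sqrt_sub_sqrt_mul hlam hsig (euclNorm_nonneg z) ?_ ?_
  · have hz : a ⬝ᵥ (C.clProd k * (C.clProd k)ᵀ) *ᵥ a = euclNorm z ^ 2 := by
      rw [← mulVec_mulVec, ← transpose_mulVec_dotProduct, sq_euclNorm]
    have := (C.posSemidef_cov_smul_one_sub D lam k).dotProduct_mulVec_nonneg a
    rw [star_trivial, sub_mulVec, dotProduct_sub, smul_mulVec, dotProduct_smul, smul_eq_mul,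
      hz] at this
    linarith
  · rw [hquad, sub_mulVec, dotProduct_sub, dotProduct_smul_one_mulVec]
    linarith [dotProduct_mulVec_le_lamMax_mul Sig0 z]

variable {D Sig0 : Matrix (Fin n) (Fin n) ℝ} {mu0 : Fin n → ℝ} {c lam : ℝ}

theorem stateOK_of_forall_smul_one (hc : 0 ≤ c) (hlam : 0 ≤ lam) (hsig : lam ≤ lamMax Sig0)
    {ax : Fin I → Fin n → ℝ} {bx : Fin I → ℝ}
    (H : ∀ w, euclNorm w ≤ euclNorm (mu0 - C.xbar 0) + c * (√(lamMax Sig0) - √lam) →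
      stateOK c ax bx D C (C.xbar 0 + w) (lam • 1)) :
    stateOK c ax bx D C mu0 Sig0 := by
  intro i k hk
  have hmean (mu : Fin n → ℝ) : ax i ⬝ᵥ C.mean mu k
      = ax i ⬝ᵥ C.xbar k + (C.clProd k)ᵀ *ᵥ ax i ⬝ᵥ (mu - C.xbar 0) := by
    rw [transpose_mulVec_dotProduct, ← C.mean_sub_xbar mu hk, ← dotProduct_add, add_sub_cancel]
  rw [hmean]
  refine add_dotProduct_add_mul_le_of_forall le_rfl (sub_nonneg.2 (Real.sqrt_le_sqrt hsig)) hc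
    (C.sqrt_dotProduct_cov_mulVec_le D hlam hsig k _) fun w hw => ?_
  simpa [hmean] using H w hw i k hk

theorem ctrlOK_of_forall_smul_one (hc : 0 ≤ c) (hlam : 0 ≤ lam) (hsig : lam ≤ lamMax Sig0)
    {au : Fin J → Fin m → ℝ} {bu : Fin J → ℝ}
    (H : ∀ w, euclNorm w ≤ euclNorm (mu0 - C.xbar 0) + c * (√(lamMax Sig0) - √lam) →
      ctrlOK c au bu D C (C.xbar 0 + w) (lam • 1)) :
    ctrlOK c au bu D C mu0 Sig0 := by
  intro j k hk
  have hmean (mu : Fin n → ℝ) : au j ⬝ᵥ (C.ubar k + C.K k *ᵥ (C.mean mu k - C.xbar k))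
      = au j ⬝ᵥ C.ubar k + (C.clProd k)ᵀ *ᵥ ((C.K k)ᵀ *ᵥ au j) ⬝ᵥ (mu - C.xbar 0) := by
    rw [C.mean_sub_xbar mu hk.le, dotProduct_add, ← transpose_mulVec_dotProduct,
      ← transpose_mulVec_dotProduct]
  rw [hmean, dotProduct_mul_mul_transpose_mulVec]
  refine add_dotProduct_add_mul_le_of_forall le_rfl (sub_nonneg.2 (Real.sqrt_le_sqrt hsig)) hc
    (C.sqrt_dotProduct_cov_mulVec_le D hlam hsig k _) fun w hw => ?_
  simpa [hmean, dotProduct_mul_mul_transpose_mulVec] using H w hw j k hk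

theorem inBall_of_forall_smul_one (hn : 1 ≤ n) (hc : 0 ≤ c) (hlam : 0 ≤ lam)
    (hsig : lam ≤ lamMax Sig0) {r : ℝ}
    (H : ∀ w, euclNorm w ≤ euclNorm (mu0 - C.xbar 0) + c * (√(lamMax Sig0) - √lam) →
      inBall c (C.xbar T) r (C.mean (C.xbar 0 + w) T) (C.cov D (lam • 1) T)) :
    inBall c (C.xbar T) r (C.mean mu0 T) (C.cov D Sig0 T) := by
  obtain ⟨v, hv, hmax⟩ := exists_dotProduct_mulVec_eq_lamMax hn (C.cov D Sig0 T)
  unfold inBall at H ⊢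
  rw [C.mean_sub_xbar _ le_rfl]
  refine euclNorm_mulVec_add_mul_le_of_forall _ (q' := √(lamMax (C.cov D (lam • 1) T)))
    le_rfl hv (sub_nonneg.2 (Real.sqrt_le_sqrt hsig)) hc ?_ fun w hw => ?_
  · rw [← hmax]
    linarith [C.sqrt_dotProduct_cov_mulVec_le D hlam hsig T v,
      Real.sqrt_le_sqrt (le_lamMax (C.cov D (lam • 1) T) hv)]
  · simpa [C.mean_sub_xbar _ le_rfl] using H w hw

end Policy

end

theorem ball_invariance_general (n m T I J : ℕ) (hn : 1 ≤ n)
    (c : ℝ) (hc : 0 < c)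
    (A : Matrix (Fin n) (Fin n) ℝ) (B : Matrix (Fin n) (Fin m) ℝ)
    (D : Matrix (Fin n) (Fin n) ℝ)
    (ax : Fin I → Fin n → ℝ) (bx : Fin I → ℝ)
    (au : Fin J → Fin m → ℝ) (bu : Fin J → ℝ)
    (C : Policy n m T A B) (muI : Fin n → ℝ) (hx0 : C.xbar 0 = muI)
    (rI rN lam : ℝ) (hlam : 0 ≤ lam) :
    (∀ mu0 : Fin n → ℝ,
        inBall c muI rI mu0 (lam • (1 : Matrix (Fin n) (Fin n) ℝ)) →
        stateOK c ax bx D C mu0 (lam • 1) ∧ ctrlOK c au bu D C mu0 (lam • 1) ∧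
        inBall c (C.xbar T) rN (C.mean mu0 T) (C.cov D (lam • 1) T))
    ↔
    (∀ (mu0 : Fin n → ℝ) (Sig0 : Matrix (Fin n) (Fin n) ℝ),
        Sig0.PosSemidef →
        (Sig0 - lam • (1 : Matrix (Fin n) (Fin n) ℝ)).PosSemidef →
        inBall c muI rI mu0 Sig0 →
        stateOK c ax bx D C mu0 Sig0 ∧ ctrlOK c au bu D C mu0 Sig0 ∧
        inBall c (C.xbar T) rN (C.mean mu0 T) (C.cov D Sig0 T)) := by
  subst hx0
  refine ⟨fun h mu0 Sig0 _ hdiff hball => ?_, fun h mu0 => h mu0 _ (PosSemidef.one.smul hlam)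
    (by simpa using PosSemidef.zero)⟩
  have hsig := le_lamMax_of_posSemidef_sub hn hdiff
  have H : ∀ w, euclNorm w ≤ euclNorm (mu0 - C.xbar 0) + c * (√(lamMax Sig0) - √lam) →
      stateOK c ax bx D C (C.xbar 0 + w) (lam • 1) ∧ ctrlOK c au bu D C (C.xbar 0 + w) (lam • 1) ∧
      inBall c (C.xbar T) rN (C.mean (C.xbar 0 + w) T) (C.cov D (lam • 1) T) := by
    refine fun w hw => h _ ?_
    have : euclNorm (mu0 - C.xbar 0) + c * √(lamMax Sig0) ≤ rI := hball
    rw [inBall, add_sub_cancel_left, lamMax_smul_one hn]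
    linarith
  exact ⟨C.stateOK_of_forall_smul_one hc.le hlam hsig fun w hw => (H w hw).1,
    C.ctrlOK_of_forall_smul_one hc.le hlam hsig fun w hw => (H w hw).2.1,
    C.inBall_of_forall_smul_one hn hc.le hlam hsig fun w hw => (H w hw).2.2⟩

/-- Ball invariance, Lemma 1. -/
theorem ball_invariance (n m T I J : ℕ) (hn : 1 ≤ n) (hm : 1 ≤ m) (hT : 1 ≤ T)
    (c : ℝ) (hc : 0 < c)
    (A : Matrix (Fin n) (Fin n) ℝ) (B : Matrix (Fin n) (Fin m) ℝ)
    (D : Matrix (Fin n) (Fin n) ℝ)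
    (ax : Fin I → Fin n → ℝ) (bx : Fin I → ℝ)
    (au : Fin J → Fin m → ℝ) (bu : Fin J → ℝ)
    (C : Policy n m T A B) (muI : Fin n → ℝ) (hx0 : C.xbar 0 = muI)
    (rI rN lam : ℝ) (hrI : 0 ≤ rI) (hrN : 0 ≤ rN) (hlam : 0 ≤ lam) :
    (∀ mu0 : Fin n → ℝ,
        inBall c muI rI mu0 (lam • (1 : Matrix (Fin n) (Fin n) ℝ)) →
        stateOK c ax bx D C mu0 (lam • 1) ∧ ctrlOK c au bu D C mu0 (lam • 1) ∧
        inBall c (C.xbar T) rN (C.mean mu0 T) (C.cov D (lam • 1) T))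
    ↔
    (∀ (mu0 : Fin n → ℝ) (Sig0 : Matrix (Fin n) (Fin n) ℝ),
        Sig0.PosSemidef →
        (Sig0 - lam • (1 : Matrix (Fin n) (Fin n) ℝ)).PosSemidef →
        inBall c muI rI mu0 Sig0 →
        stateOK c ax bx D C mu0 Sig0 ∧ ctrlOK c au bu D C mu0 Sig0 ∧
        inBall c (C.xbar T) rN (C.mean mu0 T) (C.cov D Sig0 T)) :=
  ball_invariance_general n m T I J hn c hc A B D ax bx au bu C muI hx0 rI rN lam hlam
end

section
/- For positive definite n×n real matrices P and Q and s ∈ ℝⁿ, the ellipsoid ℰ(s, P) = {x ∈ ℝⁿ : (x − s)ᵀ P⁻¹ (x − s) ≤ 1} is contained in ℰ(s, Q) = {x ∈ ℝⁿ : (x − s)ᵀ Q⁻¹ (x − s) ≤ 1} if and only if P ⪯ Q in the positive-semidefinite (Loewner) order. -/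
/-!
Both sides are inequalities between quadratic forms. Translating by `s` and rescaling vectors,
`ℰ(s, P) ⊆ ℰ(s, Q)` holds iff `vᵀ Q⁻¹ v ≤ vᵀ P⁻¹ v` for all `v`. Inversion reverses the order of
positive definite quadratic forms because `vᵀ A⁻¹ v = max_y (2 yᵀ v - yᵀ A y)`, the maximum being
attained at `y = A⁻¹ v`, and the right-hand side decreases as `A` grows.
-/

open Matrix

namespace Matrix

variable {n : Type*} [Fintype n]

lemma smul_dotProduct_mulVec_smul (M : Matrix n n ℝ) (c : ℝ) (v : n → ℝ) :
    (c • v) ⬝ᵥ M *ᵥ (c • v) = c ^ 2 * (v ⬝ᵥ M *ᵥ v) := by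
  rw [mulVec_smul, dotProduct_smul, smul_dotProduct, smul_eq_mul, smul_eq_mul]
  ring

lemma setOf_dotProduct_mulVec_le_one_subset_iff {A B : Matrix n n ℝ} (hA : A.PosSemidef) :
    {v | v ⬝ᵥ A *ᵥ v ≤ 1} ⊆ {v | v ⬝ᵥ B *ᵥ v ≤ 1} ↔ ∀ v, v ⬝ᵥ B *ᵥ v ≤ v ⬝ᵥ A *ᵥ v := by
  refine ⟨fun hsub v => le_of_forall_pos_le_add fun ε hε => ?_,
    fun h v hv => (h v).trans hv⟩
  -- `v / √a` lies in the `A`-sublevel set; the `ε` takes care of `v ⬝ᵥ A *ᵥ v = 0`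
  set a := v ⬝ᵥ A *ᵥ v + ε
  have ha : 0 < a := add_pos_of_nonneg_of_pos (by simpa using hA.dotProduct_mulVec_nonneg v) hε
  have hc : (Real.sqrt a)⁻¹ ^ 2 = a⁻¹ := by rw [inv_pow, Real.sq_sqrt ha.le]
  have hmem := @hsub ((Real.sqrt a)⁻¹ • v) (by
    simp only [Set.mem_ofPred_eq, smul_dotProduct_mulVec_smul, hc]
    exact (inv_mul_le_one₀ ha).2 (le_add_of_nonneg_right hε.le))
  simp only [Set.mem_ofPred_eq, smul_dotProduct_mulVec_smul, hc] at hmem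
  exact (inv_mul_le_one₀ ha).1 hmem

lemma sub_posSemidef_iff_dotProduct_mulVec_le {A B : Matrix n n ℝ} (hA : A.IsHermitian)
    (hB : B.IsHermitian) :
    (B - A).PosSemidef ↔ ∀ v, v ⬝ᵥ A *ᵥ v ≤ v ⬝ᵥ B *ᵥ v := by
  simp only [posSemidef_iff_dotProduct_mulVec, hB.sub hA, true_and, star_trivial, sub_mulVec,
    dotProduct_sub, sub_nonneg]

variable [DecidableEq n]

lemma two_mul_dotProduct_sub_le_dotProduct_inv_mulVec {A : Matrix n n ℝ} (hA : A.PosDef)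
    (v y : n → ℝ) : 2 * (y ⬝ᵥ v) - y ⬝ᵥ A *ᵥ y ≤ v ⬝ᵥ A⁻¹ *ᵥ v := by
  have hAA : A *ᵥ A⁻¹ *ᵥ v = v := by
    rw [mulVec_mulVec, mul_nonsing_inv A hA.det_pos.ne'.isUnit, one_mulVec]
  have hcross : A⁻¹ *ᵥ v ⬝ᵥ A *ᵥ y = y ⬝ᵥ v := by
    have hT : Aᵀ = A := hA.isHermitian.eq
    rw [← dotProduct_transpose_mulVec, hT, hAA]
  have hsq := hA.posSemidef.dotProduct_mulVec_nonneg (y - A⁻¹ *ᵥ v)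
  simp only [star_trivial, mulVec_sub, sub_dotProduct, dotProduct_sub, hAA, hcross] at hsq
  rw [dotProduct_comm (A⁻¹ *ᵥ v) v] at hsq
  linarith

lemma dotProduct_inv_mulVec_antitone {A B : Matrix n n ℝ} (hA : A.PosDef) (hB : IsUnit B.det)
    (h : ∀ v, v ⬝ᵥ A *ᵥ v ≤ v ⬝ᵥ B *ᵥ v) (v : n → ℝ) :
    v ⬝ᵥ B⁻¹ *ᵥ v ≤ v ⬝ᵥ A⁻¹ *ᵥ v := by
  set y := B⁻¹ *ᵥ v
  have hBy : B *ᵥ y = v := by rw [mulVec_mulVec, mul_nonsing_inv B hB, one_mulVec]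
  calc v ⬝ᵥ B⁻¹ *ᵥ v = 2 * (y ⬝ᵥ v) - y ⬝ᵥ B *ᵥ y := by rw [hBy, dotProduct_comm]; ring
    _ ≤ 2 * (y ⬝ᵥ v) - y ⬝ᵥ A *ᵥ y := by linarith [h y]
    _ ≤ v ⬝ᵥ A⁻¹ *ᵥ v := two_mul_dotProduct_sub_le_dotProduct_inv_mulVec hA v y

lemma dotProduct_inv_mulVec_le_iff {A B : Matrix n n ℝ} (hA : A.PosDef) (hB : B.PosDef) :
    (∀ v, v ⬝ᵥ B⁻¹ *ᵥ v ≤ v ⬝ᵥ A⁻¹ *ᵥ v) ↔ ∀ v, v ⬝ᵥ A *ᵥ v ≤ v ⬝ᵥ B *ᵥ v := by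
  refine ⟨fun h v => ?_, fun h => dotProduct_inv_mulVec_antitone hA hB.det_pos.ne'.isUnit h⟩
  simpa only [nonsing_inv_nonsing_inv _ hA.det_pos.ne'.isUnit,
    nonsing_inv_nonsing_inv _ hB.det_pos.ne'.isUnit]
    using dotProduct_inv_mulVec_antitone hB.inv hA.inv.det_pos.ne'.isUnit h v

end Matrix

/-- ellipsoid containment is equivalent to the Loewner order. -/
theorem ellipsoid_subset_iff_loewner (n : ℕ) (s : Fin n → ℝ)
    (P Q : Matrix (Fin n) (Fin n) ℝ) (hP : P.PosDef) (hQ : Q.PosDef) :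
    {x : Fin n → ℝ | (x - s) ⬝ᵥ P⁻¹.mulVec (x - s) ≤ 1} ⊆
      {x : Fin n → ℝ | (x - s) ⬝ᵥ Q⁻¹.mulVec (x - s) ≤ 1}
    ↔ (Q - P).PosSemidef := by
  calc _ ↔ {v : Fin n → ℝ | v ⬝ᵥ P⁻¹ *ᵥ v ≤ 1} ⊆ {v | v ⬝ᵥ Q⁻¹ *ᵥ v ≤ 1} :=
        (Equiv.subRight s).surjective.preimage_subset_preimage_iff
    _ ↔ ∀ v, v ⬝ᵥ Q⁻¹ *ᵥ v ≤ v ⬝ᵥ P⁻¹ *ᵥ v :=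
        setOf_dotProduct_mulVec_le_one_subset_iff hP.inv.posSemidef
    _ ↔ ∀ v, v ⬝ᵥ P *ᵥ v ≤ v ⬝ᵥ Q *ᵥ v := dotProduct_inv_mulVec_le_iff hP hQ
    _ ↔ (Q - P).PosSemidef :=
        (sub_posSemidef_iff_dotProduct_mulVec_le hP.isHermitian hQ.isHermitian).symm
end
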